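/- Let G = (V,E) be a graph on n vertices with stabilizer generators g_i = X_i ∏_{k ∈ N(i)} Z_k, and for a ∈ {0,1}^n let P_a = ∏_{i=1}^n ((−1)^{a_i} g_i + 𝟙)/2. Fix a qubit k and set Z_{N(k)} = ∏_{i ∈ N(k)} Z_i. Then (P_a + Z_{N(k)} P_a Z_{N(k)})^{T_k} = P_a + Z_{N(k)} P_a Z_{N(k)}, i.e., the sum of the projector onto a graph-basis vector and the projector onto the vector obtained by flipping all label bits in the neighborhood of k is invariant under partial transposition on qubit k. -/

import Mathlib

/-! Since `P_a` is a polynomial in the commuting generators and `g_k = X_k Z_{N(k)}` squares to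
`1`, we get `Z_{N(k)} P_a Z_{N(k)} = X_k (g_k P_a g_k) X_k = X_k P_a X_k`. For any `M`, the
partial transpose on qubit `k` fixes the entries `(v, w)` with `v_k = w_k`, and at the others
reads the entry at `(v, w)` with bit `k` flipped in both, i.e. that of `X_k M X_k`; on
`M + X_k M X_k` this merely swaps the two summands. -/

open Matrix Finset ComplexOrder

/-- Operators on `(ℂ²)^{⊗n}`, indexed by bit strings `{0,1}^n`. -/
abbrev QMat (n : ℕ) := Matrix (Fin n → Fin 2) (Fin n → Fin 2) ℂ

/-- The tensor product `A 0 ⊗ ⋯ ⊗ A (n-1)` of one-qubit operators. -/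
def qtensor {n : ℕ} (A : Fin n → Matrix (Fin 2) (Fin 2) ℂ) : QMat n :=
  fun v w => ∏ a, A a (v a) (w a)

def PX : Matrix (Fin 2) (Fin 2) ℂ := !![0, 1; 1, 0]

def PZ : Matrix (Fin 2) (Fin 2) ℂ := !![1, 0; 0, -1]

/-- Partial transpose on the qubits in `M`. -/
def qpt {n : ℕ} (M : Finset (Fin n)) (X : QMat n) : QMat n :=
  fun v w => X (fun a => if a ∈ M then w a else v a) (fun a => if a ∈ M then v a else w a)

/-- The stabilizer generator `g_i = X_i ∏_{k ∈ N(i)} Z_k` of the graph `G`. -/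
def gGen {n : ℕ} (G : SimpleGraph (Fin n)) [DecidableRel G.Adj] (i : Fin n) : QMat n :=
  qtensor (fun a => if a = i then PX else if G.Adj i a then PZ else 1)

/-- The projector `P_a = ∏_i ((−1)^{a_i} g_i + 𝟙)/2` onto the graph-basis vector `a`. -/
noncomputable def gBasisProj {n : ℕ} (G : SimpleGraph (Fin n)) [DecidableRel G.Adj]
    (a : Fin n → Fin 2) : QMat n :=
  ((List.finRange n).map (fun i => (2 : ℂ)⁻¹ • ((-1 : ℂ) ^ (a i : ℕ) • gGen G i + 1))).prod

/-- The Pauli operator `Z_{N(k)} = ∏_{i ∈ N(k)} Z_i` acting on the neighborhood of `k`. -/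
def ZopN {n : ℕ} (G : SimpleGraph (Fin n)) [DecidableRel G.Adj] (k : Fin n) : QMat n :=
  qtensor (fun a => if a ∈ G.neighborFinset k then PZ else 1)

open Function

section Qtensor

variable {n : ℕ}

theorem qtensor_mul (A B : Fin n → Matrix (Fin 2) (Fin 2) ℂ) :
    qtensor A * qtensor B = qtensor fun a => A a * B a := by
  ext v w
  simp only [qtensor, mul_apply, ← prod_mul_distrib]
  exact (Fintype.prod_sum fun a j => A a (v a) j * B a j (w a)).symm

theorem qtensor_one : qtensor (fun _ : Fin n => (1 : Matrix (Fin 2) (Fin 2) ℂ)) = 1 := by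
  ext v w
  simp only [qtensor, one_apply, prod_boole, funext_iff, mem_univ, true_implies]

theorem qtensor_smul (c : Fin n → ℂ) (A : Fin n → Matrix (Fin 2) (Fin 2) ℂ) :
    qtensor (fun a => c a • A a) = (∏ a, c a) • qtensor A := by
  ext v w
  simp only [qtensor, Matrix.smul_apply, smul_eq_mul, prod_mul_distrib]

theorem qtensor_mul_qtensor_eq_smul {A B : Fin n → Matrix (Fin 2) (Fin 2) ℂ} (c : Fin n → ℂ)
    (h : ∀ a, A a * B a = c a • (B a * A a)) :
    qtensor A * qtensor B = (∏ a, c a) • (qtensor B * qtensor A) := by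
  simp only [qtensor_mul, h, qtensor_smul]

theorem qtensor_commute {A B : Fin n → Matrix (Fin 2) (Fin 2) ℂ}
    (h : ∀ a, Commute (A a) (B a)) : Commute (qtensor A) (qtensor B) := by
  simpa [Commute, SemiconjBy] using qtensor_mul_qtensor_eq_smul 1 fun a => by simpa using (h a).eq

end Qtensor

theorem PZ_mul_self : PZ * PZ = 1 := by
  ext i j; fin_cases i <;> fin_cases j <;> simp [PZ, mul_apply, Fin.sum_univ_two]

theorem PZ_mul_PX : PZ * PX = (-1 : ℂ) • (PX * PZ) := by
  ext i j; fin_cases i <;> fin_cases j <;> simp [PX, PZ, mul_apply, Fin.sum_univ_two]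

section Flip

variable {n : ℕ} (k : Fin n)

def flipBit : Equiv.Perm (Fin n → Fin 2) :=
  Involutive.toPerm (fun v => update v k (v k).rev) fun v => by simp

theorem flipBit_apply (v : Fin n → Fin 2) : flipBit k v = update v k (v k).rev := rfl

theorem flipBit_symm : (flipBit k).symm = flipBit k := rfl

theorem flipBit_flipBit (v : Fin n → Fin 2) : flipBit k (flipBit k v) = v :=
  (flipBit k).apply_symm_apply v

def Xop : QMat n := qtensor fun a => if a = k then PX else 1

theorem Xop_eq_permMatrix : Xop k = (flipBit k).permMatrix ℂ := by
  ext v u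
  have hsite : ∀ a, (if a = k then PX else 1) (v a) (u a)
      = if flipBit k v a = u a then (1 : ℂ) else 0 := by
    intro a
    by_cases ha : a = k
    · subst ha
      simp only [if_true, flipBit_apply, update_self]
      generalize v a = x; generalize u a = y
      fin_cases x <;> fin_cases y <;> simp [PX]
    · simp [flipBit_apply, ha, one_apply]
  simp only [Xop, qtensor, hsite, prod_boole, PEquiv.toMatrix_toPEquiv_apply, Pi.single_apply]
  simp [funext_iff, eq_comm]

theorem Xop_mul_mul_Xop (M : QMat n) :
    Xop k * M * Xop k = M.submatrix (flipBit k) (flipBit k) := by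
  rw [Xop_eq_permMatrix, PEquiv.toMatrix_toPEquiv_mul, PEquiv.mul_toMatrix_toPEquiv,
    flipBit_symm, submatrix_submatrix]
  rfl

theorem Xop_mul_self : Xop k * Xop k = 1 := by
  simpa using Xop_mul_mul_Xop k 1

theorem qpt_singleton_apply (M : QMat n) (v w : Fin n → Fin 2) :
    qpt {k} M v w = M (update v k (w k)) (update w k (v k)) := by
  simp only [qpt, mem_singleton]
  congr 1 <;> ext a <;> by_cases ha : a = k <;> simp [ha]

theorem update_eq_flipBit {v w : Fin n → Fin 2} (h : v k ≠ w k) :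
    update v k (w k) = flipBit k v := by
  rw [flipBit_apply]
  congr 1
  revert h; generalize v k = x; generalize w k = y; revert x y; decide

theorem qpt_singleton_add_Xop_conj (M : QMat n) :
    qpt {k} (M + Xop k * M * Xop k) = M + Xop k * M * Xop k := by
  ext v w
  rw [qpt_singleton_apply]
  by_cases h : v k = w k
  · rw [h, update_eq_self, ← h, update_eq_self]
  · rw [update_eq_flipBit k h, update_eq_flipBit k (Ne.symm h), Xop_mul_mul_Xop]
    simp only [Matrix.add_apply, submatrix_apply, flipBit_flipBit]
    exact add_comm _ _

end Flip

section GraphState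

variable {n : ℕ} (G : SimpleGraph (Fin n)) [DecidableRel G.Adj]

theorem gGen_eq_Xop_mul_ZopN (k : Fin n) : gGen G k = Xop k * ZopN G k := by
  rw [gGen, Xop, ZopN, qtensor_mul]
  congr 1; ext1 a
  by_cases ha : a = k <;> simp [ha]

theorem ZopN_mul_Xop (i j : Fin n) :
    ZopN G j * Xop i = (if G.Adj j i then -1 else 1 : ℂ) • (Xop i * ZopN G j) := by
  have hsign : (if G.Adj j i then -1 else 1 : ℂ) =
      ∏ a, if a = i then (if G.Adj j i then -1 else 1 : ℂ) else 1 := by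
    rw [Fintype.prod_ite_eq']
  rw [hsign, ZopN, Xop]
  refine qtensor_mul_qtensor_eq_smul _ fun a => ?_
  by_cases ha : a = i
  · subst ha
    by_cases hA : G.Adj j a <;> simp [hA, PZ_mul_PX]
  · simp [ha]

theorem Xop_commute (i j : Fin n) : Commute (Xop i) (Xop j) :=
  qtensor_commute fun a => by split_ifs <;> simp

theorem ZopN_commute (i j : Fin n) : Commute (ZopN G i) (ZopN G j) :=
  qtensor_commute fun a => by split_ifs <;> simp

theorem ZopN_mul_self (k : Fin n) : ZopN G k * ZopN G k = 1 := by
  rw [ZopN, qtensor_mul, ← qtensor_one]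
  congr 1; ext1 a
  split_ifs <;> simp [PZ_mul_self]

theorem gGen_mul_gGen (i j : Fin n) :
    gGen G i * gGen G j =
      (if G.Adj i j then -1 else 1 : ℂ) • (Xop i * Xop j * (ZopN G i * ZopN G j)) := by
  simp only [gGen_eq_Xop_mul_ZopN]
  calc Xop i * ZopN G i * (Xop j * ZopN G j) = Xop i * (ZopN G i * Xop j) * ZopN G j := by
        simp only [mul_assoc]
    _ = _ := by rw [ZopN_mul_Xop]; simp only [mul_smul_comm, smul_mul_assoc, mul_assoc]

theorem gGen_commute (i j : Fin n) : Commute (gGen G i) (gGen G j) := by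
  rw [Commute, SemiconjBy, gGen_mul_gGen, gGen_mul_gGen, (Xop_commute i j).eq,
    (ZopN_commute G i j).eq]
  simp only [G.adj_comm i j]

theorem gGen_mul_self (k : Fin n) : gGen G k * gGen G k = 1 := by
  simp [gGen_mul_gGen, Xop_mul_self, ZopN_mul_self]

theorem gGen_commute_gBasisProj (k : Fin n) (a : Fin n → Fin 2) :
    Commute (gGen G k) (gBasisProj G a) := by
  refine Commute.list_prod_right _ _ fun x hx => ?_
  obtain ⟨i, -, rfl⟩ := List.mem_map.mp hx
  exact (((gGen_commute G k i).smul_right _).add_right (Commute.one_right _)).smul_right _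

theorem ZopN_conj_eq_Xop_conj {k : Fin n} {M : QMat n} (hM : Commute (gGen G k) M) :
    ZopN G k * M * ZopN G k = Xop k * M * Xop k := by
  have hXZ : Xop k * ZopN G k = ZopN G k * Xop k := by simpa using (ZopN_mul_Xop G k k).symm
  calc ZopN G k * M * ZopN G k = Xop k * (Xop k * ZopN G k * M * (ZopN G k * Xop k)) * Xop k := by
        simp only [← mul_assoc, Xop_mul_self, one_mul]
        simp only [mul_assoc, Xop_mul_self, mul_one]
    _ = Xop k * (gGen G k * M * gGen G k) * Xop k := by rw [← hXZ, gGen_eq_Xop_mul_ZopN]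
    _ = Xop k * M * Xop k := by rw [hM.eq, mul_assoc M, gGen_mul_self, mul_one]

end GraphState

/-- `P_a + Z_{N(k)} P_a Z_{N(k)}` is invariant under partial transposition
on qubit `k` (flipping all label bits in the neighborhood of `k`). -/
theorem graph_proj_plus_neighborhood_flip_invariant_qpt
    {n : ℕ} (G : SimpleGraph (Fin n)) [DecidableRel G.Adj]
    (a : Fin n → Fin 2) (k : Fin n) :
    qpt {k} (gBasisProj G a + ZopN G k * gBasisProj G a * ZopN G k)
      = gBasisProj G a + ZopN G k * gBasisProj G a * ZopN G k := by
  rw [ZopN_conj_eq_Xop_conj G (gGen_commute_gBasisProj G k a)]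
  exact qpt_singleton_add_Xop_conj k _
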